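/- arXiv:1912.01967 — 2 statements merged into one kernel-verified Lean document; each statement's English description precedes it below -/
import Mathlib

section
/- Let S ≥ 1/2 with 2S ∈ ℕ, ℓ ≥ 1 and n ≥ 1. Let Ψ: {1,…,ℓ}^n → ℂ be permutation-symmetric with ∑_X |Ψ(X)|² = 1 and supported on configurations with at most 2S particles per site (i.e., Ψ(X) = 0 whenever #{j : x_j = x} > 2S for some x). Then ∑_{x=1}^{ℓ} ρ(x, x) ≤ (4/ℓ)·n(n−1) + (4 + √3)·(n−1)·√(n/S)·E_{ℓ,n}(Ψ)^{1/2}, where ρ(x,y) = n(n−1) ∑_{x_3,…,x_n} |Ψ(x,y,x_3,…,x_n)|² is the two-particle density of Ψ. -/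
open scoped BigOperators

noncomputable section

/-- The spin value `S = twoS / 2`. -/
def Sval (twoS : ℕ) : ℝ := twoS / 2

/-- The occupation number `n_x(X) = #{j : x_j = x}` of the site `x` in the
configuration `X` (sites are labelled `0, …, ℓ−1`). -/
def occ {n ℓ : ℕ} (X : Fin n → Fin ℓ) (x : ℕ) : ℕ :=
  (Finset.univ.filter fun j => (X j : ℕ) = x).card

/-- Permutation symmetry of an `n`-particle wave function. -/
def SymmFun {n ℓ : ℕ} (Ψ : (Fin n → Fin ℓ) → ℂ) : Prop :=
  ∀ (π : Equiv.Perm (Fin n)) (X : Fin n → Fin ℓ), Ψ (X ∘ π) = Ψ X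

/-- The square root factor `√([1 − #{k ≠ j : x_k = x}/(2S)]₊)` (note that `Real.sqrt`
of a negative number is `0`, which implements the positive part). -/
def hopCoeff (twoS : ℕ) {n ℓ : ℕ} (X : Fin n → Fin ℓ) (j : Fin n) (x : ℕ) : ℝ :=
  Real.sqrt (1 - ((Finset.univ.filter fun k => k ≠ j ∧ (X k : ℕ) = x).card : ℝ) / (twoS : ℝ))

/-- The Heisenberg energy form `E_{ℓ,n}(Ψ)` in the Holstein–Primakoff representation. -/
def Eform (twoS : ℕ) {n ℓ : ℕ} (Ψ : (Fin n → Fin ℓ) → ℂ) : ℝ :=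
  Sval twoS * ∑ j : Fin n, ∑ X : Fin n → Fin ℓ,
    if h : (X j : ℕ) + 1 < ℓ then
      ‖Ψ (Function.update X j ⟨(X j : ℕ) + 1, h⟩) * (hopCoeff twoS X j (X j : ℕ) : ℂ)
        - Ψ X * (hopCoeff twoS X j ((X j : ℕ) + 1) : ℂ)‖ ^ 2
    else 0

/-- The two-particle density `ρ(x,y) = ⟨Ψ, a†_x a†_y a_y a_x Ψ⟩`; for a permutation
symmetric normalized `Ψ` this equals `n(n−1) ∑_{x₃,…,x_n} |Ψ(x,y,x₃,…,x_n)|²`. -/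
def rho2 {n ℓ : ℕ} (Ψ : (Fin n → Fin ℓ) → ℂ) (x y : ℕ) : ℝ :=
  ∑ X : Fin n → Fin ℓ, ‖Ψ X‖ ^ 2 *
    ((Finset.univ.filter fun p : Fin n × Fin n =>
        p.1 ≠ p.2 ∧ (X p.1 : ℕ) = x ∧ (X p.2 : ℕ) = y).card : ℝ)

open Finset in
def cc (twoS : ℕ) (t : ℕ) : ℝ := Real.sqrt (1 - (t:ℝ)/(twoS:ℝ))


-- occupation under permutation
lemma occ_comp {n ℓ : ℕ} (X : Fin n → Fin ℓ) (π : Equiv.Perm (Fin n)) (x : ℕ) :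
    occ (X ∘ π) x = occ X x := by
  unfold occ
  apply Finset.card_bij' (fun k _ => π k) (fun k _ => π.symm k)
  · intro a ha; simp at ha ⊢; exact ha
  · intro a ha; simp at ha ⊢; simpa using ha
  · intro a _; simp
  · intro a _; simp

lemma occ_cons {m ℓ : ℕ} (v : Fin ℓ) (Y : Fin m → Fin ℓ) (x : ℕ) :
    occ (Fin.cons v Y) x = occ Y x + if (v : ℕ) = x then 1 else 0 := by
  unfold occ
  rw [Finset.card_filter, Finset.card_filter, Fin.sum_univ_succ]
  simp [Fin.cons_zero, Fin.cons_succ, add_comm]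

lemma sum_occ {m ℓ : ℕ} (Y : Fin m → Fin ℓ) :
    ∑ x : Fin ℓ, occ Y (x : ℕ) = m := by
  unfold occ
  simp only [Finset.card_filter]
  rw [Finset.sum_comm]
  have : ∀ j : Fin m, (∑ x : Fin ℓ, if (Y j : ℕ) = (x:ℕ) then 1 else 0) = 1 := by
    intro j
    have : ∀ x : Fin ℓ, ((Y j : ℕ) = (x:ℕ)) = (x = Y j) := by
      intro x; simp [Fin.val_eq_val, eq_comm]
    simp_rw [this]
    simp
  simp_rw [this]
  simp

lemma sum_cons_decomp {m ℓ : ℕ} {M : Type*} [AddCommMonoid M]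
    (g : (Fin (m+1) → Fin ℓ) → M) :
    ∑ X : Fin (m+1) → Fin ℓ, g X = ∑ v : Fin ℓ, ∑ Y : Fin m → Fin ℓ, g (Fin.cons v Y) := by
  calc ∑ X : Fin (m+1) → Fin ℓ, g X
      = ∑ p : Fin ℓ × (Fin m → Fin ℓ), g (Fin.cons p.1 p.2) :=
        (Fintype.sum_equiv (Fin.consEquiv (fun _ => Fin ℓ)) _ g (fun p => rfl)).symm
    _ = ∑ v : Fin ℓ, ∑ Y : Fin m → Fin ℓ, g (Fin.cons v Y) := Fintype.sum_prod_type _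

lemma sum_comp_perm {n ℓ : ℕ} {M : Type*} [AddCommMonoid M]
    (g : (Fin n → Fin ℓ) → M) (π : Equiv.Perm (Fin n)) :
    ∑ X : Fin n → Fin ℓ, g (X ∘ π) = ∑ X : Fin n → Fin ℓ, g X := by
  exact Fintype.sum_equiv (Equiv.arrowCongr π.symm (Equiv.refl (Fin ℓ)))
    (fun X => g (X ∘ π)) g (fun X => rfl)


/-- Master extraction lemma. -/
lemma extract {m ℓ : ℕ} (Ψ : (Fin (m+1) → Fin ℓ) → ℂ) (hΨ : SymmFun Ψ) (v : Fin ℓ)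
    (F : (Fin (m+1) → Fin ℓ) → ℝ)
    (hF : ∀ (π : Equiv.Perm (Fin (m+1))) X, F (X ∘ π) = F X) :
    ∑ X : Fin (m+1) → Fin ℓ, ‖Ψ X‖^2 * (occ X (v:ℕ) : ℝ) * F X
      = (m+1) * ∑ Y : Fin m → Fin ℓ, ‖Ψ (Fin.cons v Y)‖^2 * F (Fin.cons v Y) := by
  have hocc : ∀ X : Fin (m+1) → Fin ℓ, ((occ X (v:ℕ) : ℝ))
      = ∑ j : Fin (m+1), if X j = v then (1:ℝ) else 0 := by
    intro X
    unfold occ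
    rw [Finset.card_filter]
    push_cast
    congr 1
    ext j
    congr 1
    simp [Fin.val_eq_val, eq_comm]
  calc ∑ X : Fin (m+1) → Fin ℓ, ‖Ψ X‖^2 * (occ X (v:ℕ) : ℝ) * F X
      = ∑ X : Fin (m+1) → Fin ℓ, ∑ j : Fin (m+1),
          (if X j = v then ‖Ψ X‖^2 * F X else 0) := by
        apply Finset.sum_congr rfl
        intro X _
        rw [hocc X, mul_comm (‖Ψ X‖^2), mul_assoc, Finset.sum_mul]
        apply Finset.sum_congr rfl
        intro j _
        by_cases h : X j = v <;> simp [h]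
    _ = ∑ j : Fin (m+1), ∑ X : Fin (m+1) → Fin ℓ,
          (if X j = v then ‖Ψ X‖^2 * F X else 0) := Finset.sum_comm
    _ = ∑ j : Fin (m+1), ∑ X : Fin (m+1) → Fin ℓ,
          (if X 0 = v then ‖Ψ X‖^2 * F X else 0) := by
        apply Finset.sum_congr rfl
        intro j _
        rw [← sum_comp_perm (fun X => if X 0 = v then ‖Ψ X‖^2 * F X else 0) (Equiv.swap 0 j)]
        apply Finset.sum_congr rfl
        intro X _
        have h0 : (X ∘ (Equiv.swap 0 j)) 0 = X j := by simp
        rw [h0, hΨ _ X, hF _ X]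
    _ = (m+1) * ∑ X : Fin (m+1) → Fin ℓ,
          (if X 0 = v then ‖Ψ X‖^2 * F X else 0) := by
        rw [Finset.sum_const, Finset.card_univ, Fintype.card_fin, nsmul_eq_mul]
        push_cast
        ring
    _ = (m+1) * ∑ Y : Fin m → Fin ℓ, ‖Ψ (Fin.cons v Y)‖^2 * F (Fin.cons v Y) := by
        congr 1
        rw [sum_cons_decomp (fun X => if X 0 = v then ‖Ψ X‖^2 * F X else 0)]
        rw [Finset.sum_comm]
        calc ∑ Y : Fin m → Fin ℓ, ∑ w : Fin ℓ,
              (if (Fin.cons w Y : Fin (m+1) → Fin ℓ) 0 = v then ‖Ψ (Fin.cons w Y)‖^2 * F (Fin.cons w Y) else 0)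
            = ∑ Y : Fin m → Fin ℓ, ∑ w : Fin ℓ,
              (if w = v then ‖Ψ (Fin.cons w Y)‖^2 * F (Fin.cons w Y) else 0) := by
              simp [Fin.cons_zero]
          _ = ∑ Y : Fin m → Fin ℓ, ‖Ψ (Fin.cons v Y)‖^2 * F (Fin.cons v Y) := by
              apply Finset.sum_congr rfl
              intro Y _
              rw [Finset.sum_ite_eq' Finset.univ v]
              simp

lemma cc_nonneg (twoS t : ℕ) : 0 ≤ cc twoS t := Real.sqrt_nonneg _
lemma cc_le_one (twoS t : ℕ) : cc twoS t ≤ 1 := by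
  unfold cc
  rw [show (1:ℝ) = Real.sqrt 1 by simp]
  apply Real.sqrt_le_sqrt
  have : 0 ≤ (t:ℝ)/(twoS:ℝ) := by positivity
  simp [Real.sqrt_one]
  linarith

lemma sq_cc {twoS t : ℕ} (hS : 1 ≤ twoS) (ht : t ≤ twoS) :
    cc twoS t ^ 2 = 1 - (t:ℝ)/(twoS:ℝ) := by
  apply Real.sq_sqrt
  have h0 : (0:ℝ) < twoS := by exact_mod_cast hS
  rw [sub_nonneg, div_le_one h0]
  exact_mod_cast ht

lemma normsq_diff_le (u v : ℂ) : |‖u‖^2 - ‖v‖^2| ≤ ‖u - v‖ * (‖u‖ + ‖v‖) := by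
  have h1 : ‖u‖^2 - ‖v‖^2 = (‖u‖-‖v‖)*(‖u‖+‖v‖) := by ring
  rw [h1, abs_mul, abs_of_nonneg (by positivity : (0:ℝ) ≤ ‖u‖ + ‖v‖)]
  exact mul_le_mul_of_nonneg_right (abs_norm_sub_norm_le u v) (by positivity)

lemma norm_mul_cc (twoS t : ℕ) (u : ℂ) : ‖u * (cc twoS t : ℂ)‖ = ‖u‖ * cc twoS t := by
  rw [norm_mul, Complex.norm_real, Real.norm_eq_abs, abs_of_nonneg (cc_nonneg twoS t)]



lemma hopCoeff_comp {twoS n ℓ : ℕ} (X : Fin n → Fin ℓ) (π : Equiv.Perm (Fin n))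
    (j : Fin n) (x : ℕ) : hopCoeff twoS (X ∘ π) j x = hopCoeff twoS X (π j) x := by
  unfold hopCoeff
  have hc : (Finset.univ.filter fun k => k ≠ j ∧ ((X ∘ π) k : ℕ) = x).card
      = (Finset.univ.filter fun k => k ≠ π j ∧ (X k : ℕ) = x).card := by
    apply Finset.card_bij' (fun k _ => π k) (fun k _ => π.symm k)
    · intro a ha
      simp only [Finset.mem_filter, Finset.mem_univ, true_and] at ha ⊢
      exact ⟨fun h => ha.1 (π.injective h), ha.2⟩
    · intro a ha
      simp only [Finset.mem_filter, Finset.mem_univ, true_and, Function.comp_apply] at ha ⊢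
      constructor
      · intro h; apply ha.1; rw [← h]; simp
      · simpa using ha.2
    · intro a _; simp
    · intro a _; simp
  rw [hc]

lemma hopCoeff_cons {twoS m ℓ : ℕ} (v : Fin ℓ) (Y : Fin m → Fin ℓ) (x : ℕ) :
    hopCoeff twoS (Fin.cons v Y) 0 x = cc twoS (occ Y x) := by
  unfold hopCoeff cc occ
  congr 2
  rw [Finset.card_filter, Finset.card_filter, Fin.sum_univ_succ]
  simp [Fin.cons_succ, Fin.succ_ne_zero]

/-- the summand of the energy, for particle j -/
def Eterm (twoS : ℕ) {n ℓ : ℕ} (Ψ : (Fin n → Fin ℓ) → ℂ) (j : Fin n) (X : Fin n → Fin ℓ) : ℝ :=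
  if h : (X j : ℕ) + 1 < ℓ then
    ‖Ψ (Function.update X j ⟨(X j : ℕ) + 1, h⟩) * (hopCoeff twoS X j (X j : ℕ) : ℂ)
      - Ψ X * (hopCoeff twoS X j ((X j : ℕ) + 1) : ℂ)‖ ^ 2
  else 0

/-- reduced bond energy -/
def Dsq (twoS : ℕ) {m ℓ : ℕ} (Ψ : (Fin (m+1) → Fin ℓ) → ℂ) (z : ℕ) : ℝ :=
  if h : z + 1 < ℓ then
    ∑ Y : Fin m → Fin ℓ,
      ‖Ψ (Fin.cons ⟨z+1, h⟩ Y) * (cc twoS (occ Y z) : ℂ)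
        - Ψ (Fin.cons ⟨z, Nat.lt_of_succ_lt h⟩ Y) * (cc twoS (occ Y (z+1)) : ℂ)‖ ^ 2
  else 0

lemma Eterm_perm {twoS m ℓ : ℕ} (Ψ : (Fin (m+1) → Fin ℓ) → ℂ) (hΨ : SymmFun Ψ) (j : Fin (m+1))
    (X : Fin (m+1) → Fin ℓ) :
    Eterm twoS Ψ j X = Eterm twoS Ψ 0 (X ∘ (Equiv.swap 0 j)) := by
  unfold Eterm
  have e0 : (X ∘ (Equiv.swap 0 j)) 0 = X j := by simp
  have hupd : ∀ (w : Fin ℓ),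
      Function.update (X ∘ (Equiv.swap 0 j)) 0 w = (Function.update X j w) ∘ (Equiv.swap 0 j) := by
    intro w
    rw [Function.update_comp_equiv X (Equiv.swap 0 j) j w]
    congr 1
    simp
  rw [e0]
  by_cases h : (X j : ℕ) + 1 < ℓ
  · rw [dif_pos h, dif_pos h]
    rw [hupd, hΨ _ _, hΨ _ X]
    rw [hopCoeff_comp, hopCoeff_comp]
    simp
  · rw [dif_neg h, dif_neg h]



section defs
variable (twoS : ℕ) {m ℓ : ℕ} (Ψ : (Fin (m+1) → Fin ℓ) → ℂ)
def Hf (x : ℕ) (z : Fin ℓ) : ℝ :=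
  ∑ Y : Fin m → Fin ℓ, (occ Y x : ℝ) * ‖Ψ (Fin.cons z Y)‖^2
def Aterm (x z : ℕ) : ℝ :=
  if h : z + 1 < ℓ then
    ∑ Y : Fin m → Fin ℓ, (occ Y x : ℝ) *
      (‖Ψ (Fin.cons ⟨z+1, h⟩ Y) * (cc twoS (occ Y z) : ℂ)‖^2
        - ‖Ψ (Fin.cons ⟨z, Nat.lt_of_succ_lt h⟩ Y) * (cc twoS (occ Y (z+1)) : ℂ)‖^2)
  else 0
def Bterm (x z : ℕ) : ℝ :=
  if h : z + 1 < ℓ then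
    ∑ Y : Fin m → Fin ℓ, (occ Y x : ℝ) *
      ((occ Y z : ℝ) * ‖Ψ (Fin.cons ⟨z+1, h⟩ Y)‖^2
        - (occ Y (z+1) : ℝ) * ‖Ψ (Fin.cons ⟨z, Nat.lt_of_succ_lt h⟩ Y)‖^2)
  else 0
def Abar (x z : ℕ) : ℝ :=
  if h : z + 1 < ℓ then
    ∑ Y : Fin m → Fin ℓ, (occ Y x : ℝ) *
      (‖Ψ (Fin.cons ⟨z+1, h⟩ Y) * (cc twoS (occ Y z) : ℂ)
          - Ψ (Fin.cons ⟨z, Nat.lt_of_succ_lt h⟩ Y) * (cc twoS (occ Y (z+1)) : ℂ)‖ *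
        (‖Ψ (Fin.cons ⟨z+1, h⟩ Y) * (cc twoS (occ Y z) : ℂ)‖
          + ‖Ψ (Fin.cons ⟨z, Nat.lt_of_succ_lt h⟩ Y) * (cc twoS (occ Y (z+1)) : ℂ)‖))
  else 0
def GD (z : ℕ) : ℝ :=
  if h : z + 1 < ℓ then
    ∑ Y : Fin m → Fin ℓ,
      (‖Ψ (Fin.cons ⟨z+1, h⟩ Y) * (cc twoS (occ Y z) : ℂ)
          - Ψ (Fin.cons ⟨z, Nat.lt_of_succ_lt h⟩ Y) * (cc twoS (occ Y (z+1)) : ℂ)‖ *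
        (‖Ψ (Fin.cons ⟨z+1, h⟩ Y) * (cc twoS (occ Y z) : ℂ)‖
          + ‖Ψ (Fin.cons ⟨z, Nat.lt_of_succ_lt h⟩ Y) * (cc twoS (occ Y (z+1)) : ℂ)‖))
  else 0
def Gsq (z : ℕ) : ℝ :=
  if h : z + 1 < ℓ then
    ∑ Y : Fin m → Fin ℓ,
      (‖Ψ (Fin.cons ⟨z+1, h⟩ Y) * (cc twoS (occ Y z) : ℂ)‖
        + ‖Ψ (Fin.cons ⟨z, Nat.lt_of_succ_lt h⟩ Y) * (cc twoS (occ Y (z+1)) : ℂ)‖) ^ 2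
  else 0
def HD (x z : ℕ) : ℝ := if hz : z < ℓ then Hf Ψ x ⟨z, hz⟩ else 0
end defs


lemma Abar_nonneg (twoS : ℕ) {m ℓ : ℕ} (Ψ : (Fin (m+1) → Fin ℓ) → ℂ) (x z : ℕ) :
    0 ≤ Abar twoS Ψ x z := by
  unfold Abar
  split
  · apply Finset.sum_nonneg
    intro Y _
    positivity
  · exact le_refl 0

lemma Aterm_abs_le (twoS : ℕ) {m ℓ : ℕ} (Ψ : (Fin (m+1) → Fin ℓ) → ℂ) (x z : ℕ) :
    |Aterm twoS Ψ x z| ≤ Abar twoS Ψ x z := by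
  unfold Aterm Abar
  split
  · apply (Finset.abs_sum_le_sum_abs _ _).trans
    apply Finset.sum_le_sum
    intro Y _
    rw [abs_mul, abs_of_nonneg (by positivity : (0:ℝ) ≤ (occ Y x : ℝ))]
    apply mul_le_mul_of_nonneg_left _ (by positivity)
    exact normsq_diff_le _ _
  · simp

/-- The bond identity. -/
lemma bond {twoS : ℕ} (hS : 1 ≤ twoS) {m ℓ : ℕ} (Ψ : (Fin (m+1) → Fin ℓ) → ℂ)
    (hsupp : ∀ X : Fin (m+1) → Fin ℓ, (∃ x : ℕ, twoS < occ X x) → Ψ X = 0)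
    (x z : ℕ) (h : z + 1 < ℓ) :
    Hf Ψ x ⟨z+1, h⟩ - Hf Ψ x ⟨z, Nat.lt_of_succ_lt h⟩
      = Aterm twoS Ψ x z + (1/(twoS:ℝ)) * Bterm Ψ x z := by
  unfold Hf Aterm Bterm
  rw [dif_pos h, dif_pos h, ← Finset.sum_sub_distrib, Finset.mul_sum, ← Finset.sum_add_distrib]
  apply Finset.sum_congr rfl
  intro Y _
  set Ψ1 := Ψ (Fin.cons ⟨z+1, h⟩ Y) with hΨ1
  set Ψ0 := Ψ (Fin.cons ⟨z, Nat.lt_of_succ_lt h⟩ Y) with hΨ0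
  set p := occ Y z with hp
  set q := occ Y (z+1) with hq
  have hs0 : (0:ℝ) < twoS := by exact_mod_cast hS
  have fact1 : (1 - (p:ℝ)/(twoS:ℝ) - cc twoS p ^ 2) * ‖Ψ1‖^2 = 0 := by
    by_cases hz : Ψ1 = 0
    · rw [hz]; simp
    · have hple : p ≤ twoS := by
        by_contra hgt
        push_neg at hgt
        apply hz
        apply hsupp
        refine ⟨z, ?_⟩
        rw [occ_cons]
        have : ((⟨z+1, h⟩ : Fin ℓ) : ℕ) = z + 1 := rfl
        rw [this]
        simp only [Nat.succ_ne_self z, if_neg (Nat.succ_ne_self z)]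
        omega
      rw [sq_cc hS hple]
      ring
  have fact2 : (1 - (q:ℝ)/(twoS:ℝ) - cc twoS q ^ 2) * ‖Ψ0‖^2 = 0 := by
    by_cases hz : Ψ0 = 0
    · rw [hz]; simp
    · have hqle : q ≤ twoS := by
        by_contra hgt
        push_neg at hgt
        apply hz
        apply hsupp
        refine ⟨z+1, ?_⟩
        rw [occ_cons]
        have : ((⟨z, Nat.lt_of_succ_lt h⟩ : Fin ℓ) : ℕ) = z := rfl
        rw [this]
        rw [if_neg (by omega : ¬ z = z + 1)]
        omega
      rw [sq_cc hS hqle]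
      ring
  have hn1 : ‖Ψ1 * (cc twoS p : ℂ)‖^2 = cc twoS p ^2 * ‖Ψ1‖^2 := by
    rw [norm_mul_cc]; ring
  have hn0 : ‖Ψ0 * (cc twoS q : ℂ)‖^2 = cc twoS q ^2 * ‖Ψ0‖^2 := by
    rw [norm_mul_cc]; ring
  rw [hn1, hn0]
  linear_combination (occ Y x : ℝ) * fact1 - (occ Y x:ℝ) * fact2

lemma Bterm_eval {m ℓ : ℕ} (Ψ : (Fin (m+1) → Fin ℓ) → ℂ) (hΨ : SymmFun Ψ)
    (x z : ℕ) (h : z + 1 < ℓ) :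
    ((m:ℝ)+1) * Bterm Ψ x z
      = ∑ X : Fin (m+1) → Fin ℓ, ‖Ψ X‖^2 * ((occ X z : ℝ) * (occ X (z+1) : ℝ) *
          ((if z = x then (1:ℝ) else 0) - (if z+1 = x then (1:ℝ) else 0))) := by
  set v1 : Fin ℓ := ⟨z+1, h⟩ with hv1
  set v0 : Fin ℓ := ⟨z, Nat.lt_of_succ_lt h⟩ with hv0
  set F1 : (Fin (m+1) → Fin ℓ) → ℝ :=
    fun X => ((occ X x : ℝ) - if z+1 = x then 1 else 0) * (occ X z : ℝ) with hF1def
  set F0 : (Fin (m+1) → Fin ℓ) → ℝ :=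
    fun X => ((occ X x : ℝ) - if z = x then 1 else 0) * (occ X (z+1) : ℝ) with hF0def
  have hF1 : ∀ (π : Equiv.Perm (Fin (m+1))) X, F1 (X ∘ π) = F1 X := by
    intro π X; simp [hF1def, occ_comp]
  have hF0 : ∀ (π : Equiv.Perm (Fin (m+1))) X, F0 (X ∘ π) = F0 X := by
    intro π X; simp [hF0def, occ_comp]
  have e1 := extract Ψ hΨ v1 F1 hF1
  have e0 := extract Ψ hΨ v0 F0 hF0
  have c1 : ∀ Y : Fin m → Fin ℓ, F1 (Fin.cons v1 Y) = (occ Y x : ℝ) * (occ Y z : ℝ) := by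
    intro Y
    have h1 : occ (Fin.cons v1 Y) x = occ Y x + if z + 1 = x then 1 else 0 := occ_cons v1 Y x
    have h2 : occ (Fin.cons v1 Y) z = occ Y z := by
      rw [(occ_cons v1 Y z : _ = occ Y z + if z + 1 = z then 1 else 0),
        if_neg (by omega : ¬ z + 1 = z), add_zero]
    simp only [hF1def, h1, h2]
    by_cases hx : z + 1 = x <;> simp [hx]
  have c0 : ∀ Y : Fin m → Fin ℓ, F0 (Fin.cons v0 Y) = (occ Y x : ℝ) * (occ Y (z+1) : ℝ) := by
    intro Y
    have h1 : occ (Fin.cons v0 Y) x = occ Y x + if z = x then 1 else 0 := occ_cons v0 Y x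
    have h2 : occ (Fin.cons v0 Y) (z+1) = occ Y (z+1) := by
      rw [(occ_cons v0 Y (z+1) : _ = occ Y (z+1) + if z = z + 1 then 1 else 0),
        if_neg (by omega : ¬ z = z + 1), add_zero]
    simp only [hF0def, h1, h2]
    by_cases hx : z = x <;> simp [hx]
  have hv1n : (v1 : ℕ) = z + 1 := rfl
  have hv0n : (v0 : ℕ) = z := rfl
  have split : ((m:ℝ)+1) * Bterm Ψ x z
      = (((m:ℕ):ℝ)+1) * ∑ Y : Fin m → Fin ℓ, ‖Ψ (Fin.cons v1 Y)‖^2 * F1 (Fin.cons v1 Y)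
        - (((m:ℕ):ℝ)+1) * ∑ Y : Fin m → Fin ℓ, ‖Ψ (Fin.cons v0 Y)‖^2 * F0 (Fin.cons v0 Y) := by
    unfold Bterm
    rw [dif_pos h]
    rw [← mul_sub, ← Finset.sum_sub_distrib]
    congr 1
    apply Finset.sum_congr rfl
    intro Y _
    rw [c1 Y, c0 Y]
    ring
  rw [split]
  have hm1 : ((m:ℝ)+1) = (((m+1:ℕ)):ℝ) := by push_cast; ring
  rw [← e1, ← e0]
  rw [← Finset.sum_sub_distrib]
  apply Finset.sum_congr rfl
  intro X _
  rw [hv1n, hv0n]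
  simp only [hF1def, hF0def]
  ring

lemma Bterm_sign_nonneg {m ℓ : ℕ} (Ψ : (Fin (m+1) → Fin ℓ) → ℂ) (hΨ : SymmFun Ψ)
    (z : ℕ) : 0 ≤ Bterm Ψ z z := by
  by_cases h : z + 1 < ℓ
  · have he := Bterm_eval Ψ hΨ z z h
    have hpos : (0:ℝ) < (m:ℝ)+1 := by positivity
    have : 0 ≤ ((m:ℝ)+1) * Bterm Ψ z z := by
      rw [he]
      apply Finset.sum_nonneg
      intro X _
      rw [if_pos rfl, if_neg (by omega : ¬ z + 1 = z)]
      positivity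
    nlinarith
  · unfold Bterm; rw [dif_neg h]

lemma Bterm_sign_nonpos {m ℓ : ℕ} (Ψ : (Fin (m+1) → Fin ℓ) → ℂ) (hΨ : SymmFun Ψ)
    (z : ℕ) : Bterm Ψ (z+1) z ≤ 0 := by
  by_cases h : z + 1 < ℓ
  · have he := Bterm_eval Ψ hΨ (z+1) z h
    have hpos : (0:ℝ) < (m:ℝ)+1 := by positivity
    have : ((m:ℝ)+1) * Bterm Ψ (z+1) z ≤ 0 := by
      rw [he]
      apply Finset.sum_nonpos
      intro X _
      rw [if_neg (by omega : ¬ z = z + 1), if_pos rfl]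
      have h1 : (0:ℝ) ≤ ‖Ψ X‖^2 := by positivity
      have h2 : (0:ℝ) ≤ (occ X z : ℝ) * (occ X (z+1) : ℝ) := by positivity
      nlinarith
    nlinarith
  · unfold Bterm; rw [dif_neg h]

lemma Bterm_sign_zero {m ℓ : ℕ} (Ψ : (Fin (m+1) → Fin ℓ) → ℂ) (hΨ : SymmFun Ψ)
    (x z : ℕ) (hx1 : x ≠ z) (hx2 : x ≠ z+1) : Bterm Ψ x z = 0 := by
  by_cases h : z + 1 < ℓ
  · have he := Bterm_eval Ψ hΨ x z h
    have hpos : ((m:ℝ)+1) ≠ 0 := by positivity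
    have : ((m:ℝ)+1) * Bterm Ψ x z = 0 := by
      rw [he]
      apply Finset.sum_eq_zero
      intro X _
      rw [if_neg (fun hh => hx1 hh.symm), if_neg (fun hh => hx2 hh.symm)]
      ring
    exact (mul_eq_zero.mp this).resolve_left hpos
  · unfold Bterm; rw [dif_neg h]

/-- Telescoping. -/
lemma telescope {twoS : ℕ} (hS : 1 ≤ twoS) {m ℓ : ℕ} (Ψ : (Fin (m+1) → Fin ℓ) → ℂ)
    (hsupp : ∀ X : Fin (m+1) → Fin ℓ, (∃ x : ℕ, twoS < occ X x) → Ψ X = 0)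
    (x a : ℕ) : ∀ (b : ℕ), a ≤ b → b < ℓ →
    HD Ψ x b - HD Ψ x a
      = ∑ z ∈ Finset.Ico a b, (Aterm twoS Ψ x z + (1/(twoS:ℝ)) * Bterm Ψ x z) := by
  intro b
  refine Nat.le_induction ?_ ?_ b
  · intro _
    simp
  · intro b hab ih hb1
    have hb : b < ℓ := Nat.lt_of_succ_lt hb1
    rw [Finset.sum_Ico_succ_top hab, ← ih hb]
    have hbd := bond hS Ψ hsupp x b hb1
    have h1 : HD Ψ x (b+1) = Hf Ψ x ⟨b+1, hb1⟩ := dif_pos hb1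
    have h2 : HD Ψ x b = Hf Ψ x ⟨b, hb⟩ := dif_pos hb
    rw [h1, h2]
    have : Hf Ψ x (⟨b, Nat.lt_of_succ_lt hb1⟩ : Fin ℓ) = Hf Ψ x ⟨b, hb⟩ := rfl
    rw [this] at hbd
    linarith

/-- Window bound. -/
lemma window {twoS : ℕ} (hS : 1 ≤ twoS) {m ℓ : ℕ} (Ψ : (Fin (m+1) → Fin ℓ) → ℂ)
    (hΨ : SymmFun Ψ)
    (hsupp : ∀ X : Fin (m+1) → Fin ℓ, (∃ x : ℕ, twoS < occ X x) → Ψ X = 0)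
    (x z : ℕ) (hx : x < ℓ) (hz : z < ℓ) :
    HD Ψ x x ≤ HD Ψ x z + ∑ w ∈ Finset.range ℓ, Abar twoS Ψ x w := by
  have hs0 : (0:ℝ) < twoS := by exact_mod_cast hS
  have hIcoAbs : ∀ (a b : ℕ), b < ℓ →
      ∑ w ∈ Finset.Ico a b, Aterm twoS Ψ x w ≤ ∑ w ∈ Finset.range ℓ, Abar twoS Ψ x w := by
    intro a b hb
    calc ∑ w ∈ Finset.Ico a b, Aterm twoS Ψ x w
        ≤ ∑ w ∈ Finset.Ico a b, Abar twoS Ψ x w := by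
          apply Finset.sum_le_sum
          intro w _
          exact (le_abs_self _).trans (Aterm_abs_le twoS Ψ x w)
      _ ≤ ∑ w ∈ Finset.range ℓ, Abar twoS Ψ x w := by
          apply Finset.sum_le_sum_of_subset_of_nonneg
          · intro w hw
            rw [Finset.mem_Ico] at hw
            rw [Finset.mem_range]
            omega
          · intro w _ _
            exact Abar_nonneg twoS Ψ x w
  rcases le_or_gt z x with hzx | hxz
  · have ht := telescope hS Ψ hsupp x z x hzx hx
    have hBle : ∑ w ∈ Finset.Ico z x, (1/(twoS:ℝ)) * Bterm Ψ x w ≤ 0 := by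
      apply Finset.sum_nonpos
      intro w hw
      rw [Finset.mem_Ico] at hw
      have hwx : w < x := hw.2
      rcases Nat.eq_or_lt_of_le (Nat.succ_le_of_lt hwx) with heq | hlt
      · rw [← heq]
        exact mul_nonpos_of_nonneg_of_nonpos (by positivity) (Bterm_sign_nonpos Ψ hΨ w)
      · rw [Bterm_sign_zero Ψ hΨ x w (by omega) (by omega)]
        simp
    have hsplit : ∑ z_1 ∈ Finset.Ico z x, (Aterm twoS Ψ x z_1 + 1 / (twoS:ℝ) * Bterm Ψ x z_1)
        = ∑ w ∈ Finset.Ico z x, Aterm twoS Ψ x w + ∑ w ∈ Finset.Ico z x, (1/(twoS:ℝ)) * Bterm Ψ x w :=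
      Finset.sum_add_distrib
    rw [hsplit] at ht
    have hA := hIcoAbs z x hx
    linarith
  · have ht := telescope hS Ψ hsupp x x z (le_of_lt hxz) hz
    have hBge : 0 ≤ ∑ w ∈ Finset.Ico x z, (1/(twoS:ℝ)) * Bterm Ψ x w := by
      apply Finset.sum_nonneg
      intro w hw
      rw [Finset.mem_Ico] at hw
      rcases Nat.eq_or_lt_of_le hw.1 with heq | hlt
      · have hb : Bterm Ψ x w = Bterm Ψ w w := by rw [heq]
        rw [hb]
        exact mul_nonneg (by positivity) (Bterm_sign_nonneg Ψ hΨ w)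
      · rw [Bterm_sign_zero Ψ hΨ x w (by omega) (by omega)]
        simp
    have hAup : - ∑ w ∈ Finset.Ico x z, Aterm twoS Ψ x w
        ≤ ∑ w ∈ Finset.range ℓ, Abar twoS Ψ x w := by
      have h1 : - ∑ w ∈ Finset.Ico x z, Aterm twoS Ψ x w
          = ∑ w ∈ Finset.Ico x z, (- Aterm twoS Ψ x w) := by
        rw [Finset.sum_neg_distrib]
      rw [h1]
      calc ∑ w ∈ Finset.Ico x z, (- Aterm twoS Ψ x w)
          ≤ ∑ w ∈ Finset.Ico x z, Abar twoS Ψ x w := by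
            apply Finset.sum_le_sum
            intro w _
            exact (neg_le_abs _).trans (Aterm_abs_le twoS Ψ x w)
        _ ≤ ∑ w ∈ Finset.range ℓ, Abar twoS Ψ x w := by
            apply Finset.sum_le_sum_of_subset_of_nonneg
            · intro w hw
              rw [Finset.mem_Ico] at hw
              rw [Finset.mem_range]
              omega
            · intro w _ _
              exact Abar_nonneg twoS Ψ x w
    have hsplit : ∑ z_1 ∈ Finset.Ico x z, (Aterm twoS Ψ x z_1 + 1 / (twoS:ℝ) * Bterm Ψ x z_1)
        = ∑ w ∈ Finset.Ico x z, Aterm twoS Ψ x w + ∑ w ∈ Finset.Ico x z, (1/(twoS:ℝ)) * Bterm Ψ x w :=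
      Finset.sum_add_distrib
    rw [hsplit] at ht
    linarith

lemma energy_eq {twoS m ℓ : ℕ} (Ψ : (Fin (m+1) → Fin ℓ) → ℂ) (hΨ : SymmFun Ψ) :
    Eform twoS Ψ = (m+1) * (Sval twoS * ∑ z ∈ Finset.range ℓ, Dsq twoS Ψ z) := by
  have h1 : ∀ j : Fin (m+1), ∑ X : Fin (m+1) → Fin ℓ, Eterm twoS Ψ j X
      = ∑ X : Fin (m+1) → Fin ℓ, Eterm twoS Ψ 0 X := by
    intro j
    calc ∑ X : Fin (m+1) → Fin ℓ, Eterm twoS Ψ j X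
        = ∑ X : Fin (m+1) → Fin ℓ, Eterm twoS Ψ 0 (X ∘ (Equiv.swap 0 j)) :=
          Finset.sum_congr rfl (fun X _ => Eterm_perm Ψ hΨ j X)
      _ = ∑ X : Fin (m+1) → Fin ℓ, Eterm twoS Ψ 0 X :=
          sum_comp_perm (Eterm twoS Ψ 0) (Equiv.swap 0 j)
  have h2 : ∀ (v : Fin ℓ) (Y : Fin m → Fin ℓ),
      Eterm twoS Ψ 0 (Fin.cons v Y) =
      (if h : (v:ℕ) + 1 < ℓ then
        ‖Ψ (Fin.cons ⟨(v:ℕ)+1, h⟩ Y) * (cc twoS (occ Y (v:ℕ)) : ℂ)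
          - Ψ (Fin.cons v Y) * (cc twoS (occ Y ((v:ℕ)+1)) : ℂ)‖ ^ 2
      else 0) := by
    intro v Y
    unfold Eterm
    rw [Fin.cons_zero]
    by_cases h : (v:ℕ) + 1 < ℓ
    · rw [dif_pos h, dif_pos h]
      rw [Fin.update_cons_zero, hopCoeff_cons, hopCoeff_cons]
    · rw [dif_neg h, dif_neg h]
  have h3 : ∀ v : Fin ℓ, ∑ Y : Fin m → Fin ℓ, Eterm twoS Ψ 0 (Fin.cons v Y) = Dsq twoS Ψ (v:ℕ) := by
    intro v
    unfold Dsq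
    by_cases h : (v:ℕ) + 1 < ℓ
    · rw [dif_pos h]
      apply Finset.sum_congr rfl
      intro Y _
      rw [h2 v Y, dif_pos h]
    · rw [dif_neg h]
      apply Finset.sum_eq_zero
      intro Y _
      rw [h2 v Y, dif_neg h]
  calc Eform twoS Ψ = Sval twoS * ∑ j : Fin (m+1), ∑ X, Eterm twoS Ψ j X := rfl
    _ = Sval twoS * ∑ j : Fin (m+1), ∑ X, Eterm twoS Ψ 0 X := by
        congr 1; exact Finset.sum_congr rfl (fun j _ => h1 j)
    _ = Sval twoS * ((m+1) * ∑ X, Eterm twoS Ψ 0 X) := by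
        rw [Finset.sum_const, Finset.card_univ, Fintype.card_fin, nsmul_eq_mul]
        push_cast; ring
    _ = (m+1) * (Sval twoS * ∑ X, Eterm twoS Ψ 0 X) := by ring
    _ = (m+1) * (Sval twoS * ∑ z ∈ Finset.range ℓ, Dsq twoS Ψ z) := by
        congr 2
        rw [sum_cons_decomp (Eterm twoS Ψ 0)]
        rw [← Fin.sum_univ_eq_sum_range (Dsq twoS Ψ) ℓ]
        exact Finset.sum_congr rfl (fun v _ => h3 v)

lemma pair_card {n ℓ : ℕ} (X : Fin n → Fin ℓ) (x : ℕ) :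
    ((Finset.univ.filter fun p : Fin n × Fin n =>
        p.1 ≠ p.2 ∧ (X p.1 : ℕ) = x ∧ (X p.2 : ℕ) = x).card : ℕ)
      = occ X x * occ X x - occ X x := by
  have hset : (Finset.univ.filter fun p : Fin n × Fin n =>
      p.1 ≠ p.2 ∧ (X p.1 : ℕ) = x ∧ (X p.2 : ℕ) = x)
      = (Finset.univ.filter fun j => (X j : ℕ) = x).offDiag := by
    ext p
    simp only [Finset.mem_filter, Finset.mem_univ, true_and, Finset.mem_offDiag]
    tauto
  rw [hset, Finset.offDiag_card]
  rfl

lemma cast_pair (a : ℕ) : ((a * a - a : ℕ) : ℝ) = (a:ℝ) * ((a:ℝ) - 1) := by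
  rcases Nat.eq_zero_or_pos a with h0 | h0
  · subst h0; simp
  · have h : a ≤ a * a := Nat.le_mul_of_pos_left a h0
    rw [Nat.cast_sub h]; push_cast; ring

lemma rho2_diag {m ℓ : ℕ} (Ψ : (Fin (m+1) → Fin ℓ) → ℂ) (hΨ : SymmFun Ψ)
    (x : ℕ) (hx : x < ℓ) :
    rho2 Ψ x x = ((m:ℝ)+1) * Hf Ψ x ⟨x, hx⟩ := by
  have hF : ∀ (π : Equiv.Perm (Fin (m+1))) (X : Fin (m+1) → Fin ℓ),
      ((fun X => (occ X x : ℝ) - 1) (X ∘ π)) = (fun X => (occ X x : ℝ) - 1) X := by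
    intro π X; simp [occ_comp]
  have he := extract Ψ hΨ ⟨x, hx⟩ (fun X => (occ X x : ℝ) - 1) hF
  have hval : ((⟨x, hx⟩ : Fin ℓ) : ℕ) = x := rfl
  rw [hval] at he
  calc rho2 Ψ x x
      = ∑ X : Fin (m+1) → Fin ℓ, ‖Ψ X‖^2 * ((occ X x : ℝ) * ((occ X x : ℝ) - 1)) := by
        unfold rho2
        apply Finset.sum_congr rfl
        intro X _
        rw [pair_card, cast_pair]
    _ = ∑ X : Fin (m+1) → Fin ℓ, ‖Ψ X‖^2 * (occ X x : ℝ) * ((fun X => (occ X x : ℝ) - 1) X) := by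
        apply Finset.sum_congr rfl
        intro X _
        ring
    _ = ((m:ℝ)+1) * ∑ Y : Fin m → Fin ℓ, ‖Ψ (Fin.cons (⟨x,hx⟩ : Fin ℓ) Y)‖^2 *
          ((fun X => (occ X x : ℝ) - 1) (Fin.cons (⟨x,hx⟩ : Fin ℓ) Y)) := he
    _ = ((m:ℝ)+1) * Hf Ψ x ⟨x, hx⟩ := by
        congr 1
        unfold Hf
        apply Finset.sum_congr rfl
        intro Y _
        have h5 : occ (Fin.cons (⟨x,hx⟩ : Fin ℓ) Y) x = occ Y x + 1 := by
          rw [occ_cons, if_pos rfl]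
        simp only [h5]
        push_cast
        ring

lemma Hf_total {m ℓ : ℕ} (Ψ : (Fin (m+1) → Fin ℓ) → ℂ)
    (hnorm : ∑ X : Fin (m+1) → Fin ℓ, ‖Ψ X‖ ^ 2 = 1) :
    ∑ x : Fin ℓ, ∑ z : Fin ℓ, Hf Ψ (x:ℕ) z = m := by
  rw [Finset.sum_comm]
  have hz : ∀ z : Fin ℓ, ∑ x : Fin ℓ, Hf Ψ (x:ℕ) z
      = (m:ℝ) * ∑ Y : Fin m → Fin ℓ, ‖Ψ (Fin.cons z Y)‖^2 := by
    intro z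
    unfold Hf
    rw [Finset.sum_comm, Finset.mul_sum]
    apply Finset.sum_congr rfl
    intro Y _
    rw [← Finset.sum_mul]
    congr 1
    rw [← Nat.cast_sum]
    rw [sum_occ Y]
  simp_rw [hz]
  rw [← Finset.mul_sum, ← sum_cons_decomp (fun X => ‖Ψ X‖^2), hnorm, mul_one]

lemma Abar_sum_x (twoS : ℕ) {m ℓ : ℕ} (Ψ : (Fin (m+1) → Fin ℓ) → ℂ) (z : ℕ) :
    ∑ x : Fin ℓ, Abar twoS Ψ (x:ℕ) z = (m:ℝ) * GD twoS Ψ z := by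
  unfold Abar GD
  by_cases h : z + 1 < ℓ
  · simp only [dif_pos h]
    rw [Finset.sum_comm, Finset.mul_sum]
    apply Finset.sum_congr rfl
    intro Y _
    rw [← Finset.sum_mul]
    congr 1
    rw [← Nat.cast_sum, sum_occ Y]
  · simp only [dif_neg h]
    simp

/-- Cauchy-Schwarz for the bond sums -/
lemma GD_CS (twoS : ℕ) {m ℓ : ℕ} (Ψ : (Fin (m+1) → Fin ℓ) → ℂ) :
    ∑ z ∈ Finset.range ℓ, GD twoS Ψ z
      ≤ Real.sqrt (∑ z ∈ Finset.range ℓ, Dsq twoS Ψ z) *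
        Real.sqrt (∑ z ∈ Finset.range ℓ, Gsq twoS Ψ z) := by
  classical
  set s : Finset (ℕ × (Fin m → Fin ℓ)) := (Finset.range ℓ) ×ˢ Finset.univ with hs
  set f : ℕ × (Fin m → Fin ℓ) → ℝ := fun p =>
    if h : p.1 + 1 < ℓ then
      ‖Ψ (Fin.cons ⟨p.1+1, h⟩ p.2) * (cc twoS (occ p.2 p.1) : ℂ)
        - Ψ (Fin.cons ⟨p.1, Nat.lt_of_succ_lt h⟩ p.2) * (cc twoS (occ p.2 (p.1+1)) : ℂ)‖
    else 0 with hf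
  set g : ℕ × (Fin m → Fin ℓ) → ℝ := fun p =>
    if h : p.1 + 1 < ℓ then
      (‖Ψ (Fin.cons ⟨p.1+1, h⟩ p.2) * (cc twoS (occ p.2 p.1) : ℂ)‖
        + ‖Ψ (Fin.cons ⟨p.1, Nat.lt_of_succ_lt h⟩ p.2) * (cc twoS (occ p.2 (p.1+1)) : ℂ)‖)
    else 0 with hg
  have h1 : ∑ z ∈ Finset.range ℓ, GD twoS Ψ z = ∑ p ∈ s, f p * g p := by
    rw [hs, Finset.sum_product]
    apply Finset.sum_congr rfl
    intro z _
    unfold GD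
    by_cases h : z + 1 < ℓ
    · rw [dif_pos h]
      apply Finset.sum_congr rfl
      intro Y _
      simp only [hf, hg, dif_pos h]
    · rw [dif_neg h]
      symm
      apply Finset.sum_eq_zero
      intro Y _
      simp only [hf, hg, dif_neg h]
      ring
  have h2 : ∑ p ∈ s, f p ^ 2 = ∑ z ∈ Finset.range ℓ, Dsq twoS Ψ z := by
    rw [hs, Finset.sum_product]
    apply Finset.sum_congr rfl
    intro z _
    unfold Dsq
    by_cases h : z + 1 < ℓ
    · rw [dif_pos h]
      apply Finset.sum_congr rfl
      intro Y _
      simp only [hf, dif_pos h]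
    · rw [dif_neg h]
      apply Finset.sum_eq_zero
      intro Y _
      simp only [hf, dif_neg h]
      ring
  have h3 : ∑ p ∈ s, g p ^ 2 = ∑ z ∈ Finset.range ℓ, Gsq twoS Ψ z := by
    rw [hs, Finset.sum_product]
    apply Finset.sum_congr rfl
    intro z _
    unfold Gsq
    by_cases h : z + 1 < ℓ
    · rw [dif_pos h]
      apply Finset.sum_congr rfl
      intro Y _
      simp only [hg, dif_pos h]
    · rw [dif_neg h]
      apply Finset.sum_eq_zero
      intro Y _
      simp only [hg, dif_neg h]
      ring
  have hCS := Finset.sum_mul_sq_le_sq_mul_sq s f g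
  have hnn : 0 ≤ ∑ p ∈ s, f p * g p := by
    apply Finset.sum_nonneg
    intro p _
    have hfp : 0 ≤ f p := by
      simp only [hf]; split
      · positivity
      · exact le_rfl
    have hgp : 0 ≤ g p := by
      simp only [hg]; split
      · positivity
      · exact le_rfl
    exact mul_nonneg hfp hgp
  rw [h1]
  calc ∑ p ∈ s, f p * g p = Real.sqrt ((∑ p ∈ s, f p * g p)^2) := by
        rw [Real.sqrt_sq hnn]
    _ ≤ Real.sqrt ((∑ p ∈ s, f p ^2) * (∑ p ∈ s, g p ^2)) := Real.sqrt_le_sqrt hCS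
    _ = Real.sqrt (∑ p ∈ s, f p ^2) * Real.sqrt (∑ p ∈ s, g p ^2) := by
        apply Real.sqrt_mul
        apply Finset.sum_nonneg
        intro p _
        positivity
    _ = _ := by rw [h2, h3]

/-- the one-site density -/
def qv {m ℓ : ℕ} (Ψ : (Fin (m+1) → Fin ℓ) → ℂ) (z : ℕ) : ℝ :=
  if hz : z < ℓ then ∑ Y : Fin m → Fin ℓ, ‖Ψ (Fin.cons ⟨z, hz⟩ Y)‖^2 else 0

lemma qv_nonneg {m ℓ : ℕ} (Ψ : (Fin (m+1) → Fin ℓ) → ℂ) (z : ℕ) : 0 ≤ qv Ψ z := by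
  unfold qv; split
  · apply Finset.sum_nonneg; intro Y _; positivity
  · exact le_refl 0

lemma qv_sum {m ℓ : ℕ} (Ψ : (Fin (m+1) → Fin ℓ) → ℂ)
    (hnorm : ∑ X : Fin (m+1) → Fin ℓ, ‖Ψ X‖ ^ 2 = 1) :
    ∑ z ∈ Finset.range ℓ, qv Ψ z = 1 := by
  rw [← Fin.sum_univ_eq_sum_range (qv Ψ) ℓ]
  rw [← hnorm, sum_cons_decomp (fun X => ‖Ψ X‖^2)]
  apply Finset.sum_congr rfl
  intro v _
  unfold qv
  rw [dif_pos v.isLt]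

lemma qv_shift_sum {m ℓ : ℕ} (Ψ : (Fin (m+1) → Fin ℓ) → ℂ)
    (hnorm : ∑ X : Fin (m+1) → Fin ℓ, ‖Ψ X‖ ^ 2 = 1) :
    ∑ z ∈ Finset.range ℓ, qv Ψ (z+1) ≤ 1 := by
  have h1 : ∑ z ∈ Finset.range ℓ, qv Ψ (z+1) = ∑ w ∈ Finset.Ico 1 (ℓ+1), qv Ψ w := by
    rw [Finset.sum_Ico_eq_sum_range]
    simp only [Nat.add_sub_cancel]
    apply Finset.sum_congr rfl
    intro i _
    rw [Nat.add_comm 1 i]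
  rw [h1]
  calc ∑ w ∈ Finset.Ico 1 (ℓ+1), qv Ψ w
      ≤ ∑ w ∈ Finset.range (ℓ+1), qv Ψ w := by
        apply Finset.sum_le_sum_of_subset_of_nonneg
        · intro w hw
          rw [Finset.mem_Ico] at hw
          rw [Finset.mem_range]
          omega
        · intro w _ _; exact qv_nonneg Ψ w
    _ = ∑ w ∈ Finset.range ℓ, qv Ψ w + qv Ψ ℓ := Finset.sum_range_succ _ _
    _ = 1 + qv Ψ ℓ := by rw [qv_sum Ψ hnorm]
    _ = 1 := by
        unfold qv
        rw [dif_neg (lt_irrefl ℓ)]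
        ring

lemma Gsq_sum_le (twoS : ℕ) {m ℓ : ℕ} (Ψ : (Fin (m+1) → Fin ℓ) → ℂ)
    (hnorm : ∑ X : Fin (m+1) → Fin ℓ, ‖Ψ X‖ ^ 2 = 1) :
    ∑ z ∈ Finset.range ℓ, Gsq twoS Ψ z ≤ 4 := by
  have hterm : ∀ z ∈ Finset.range ℓ, Gsq twoS Ψ z ≤ 2 * qv Ψ (z+1) + 2 * qv Ψ z := by
    intro z _
    unfold Gsq
    by_cases h : z + 1 < ℓ
    · rw [dif_pos h]
      have hz : z < ℓ := Nat.lt_of_succ_lt h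
      unfold qv
      rw [dif_pos h, dif_pos hz]
      rw [Finset.mul_sum, Finset.mul_sum, ← Finset.sum_add_distrib]
      apply Finset.sum_le_sum
      intro Y _
      have e1 : ‖Ψ (Fin.cons ⟨z+1, h⟩ Y) * (cc twoS (occ Y z) : ℂ)‖ ≤ ‖Ψ (Fin.cons ⟨z+1, h⟩ Y)‖ := by
        rw [norm_mul_cc]
        calc ‖Ψ (Fin.cons ⟨z+1, h⟩ Y)‖ * cc twoS (occ Y z)
            ≤ ‖Ψ (Fin.cons ⟨z+1, h⟩ Y)‖ * 1 :=
              mul_le_mul_of_nonneg_left (cc_le_one _ _) (norm_nonneg _)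
          _ = _ := mul_one _
      have e0 : ‖Ψ (Fin.cons ⟨z, Nat.lt_of_succ_lt h⟩ Y) * (cc twoS (occ Y (z+1)) : ℂ)‖
          ≤ ‖Ψ (Fin.cons ⟨z, hz⟩ Y)‖ := by
        rw [norm_mul_cc]
        calc ‖Ψ (Fin.cons ⟨z, Nat.lt_of_succ_lt h⟩ Y)‖ * cc twoS (occ Y (z+1))
            ≤ ‖Ψ (Fin.cons ⟨z, Nat.lt_of_succ_lt h⟩ Y)‖ * 1 :=
              mul_le_mul_of_nonneg_left (cc_le_one _ _) (norm_nonneg _)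
          _ = _ := mul_one _
      set a := ‖Ψ (Fin.cons ⟨z+1, h⟩ Y) * (cc twoS (occ Y z) : ℂ)‖
      set b := ‖Ψ (Fin.cons ⟨z, Nat.lt_of_succ_lt h⟩ Y) * (cc twoS (occ Y (z+1)) : ℂ)‖
      have ha : 0 ≤ a := norm_nonneg _
      have hb : 0 ≤ b := norm_nonneg _
      have h2 : (a+b)^2 ≤ 2*a^2 + 2*b^2 := by nlinarith [sq_nonneg (a-b)]
      have h3 : a^2 ≤ ‖Ψ (Fin.cons ⟨z+1, h⟩ Y)‖^2 := by nlinarith [norm_nonneg (Ψ (Fin.cons ⟨z+1, h⟩ Y))]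
      have h4 : b^2 ≤ ‖Ψ (Fin.cons ⟨z, hz⟩ Y)‖^2 := by nlinarith [norm_nonneg (Ψ (Fin.cons ⟨z, hz⟩ Y))]
      nlinarith
    · rw [dif_neg h]
      have := qv_nonneg Ψ (z+1)
      have := qv_nonneg Ψ z
      linarith
  calc ∑ z ∈ Finset.range ℓ, Gsq twoS Ψ z
      ≤ ∑ z ∈ Finset.range ℓ, (2 * qv Ψ (z+1) + 2 * qv Ψ z) := Finset.sum_le_sum hterm
    _ = 2 * (∑ z ∈ Finset.range ℓ, qv Ψ (z+1)) + 2 * (∑ z ∈ Finset.range ℓ, qv Ψ z) := by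
        rw [Finset.sum_add_distrib, Finset.mul_sum, Finset.mul_sum]
    _ ≤ 2 * 1 + 2 * 1 := by
        have := qv_shift_sum Ψ hnorm
        have := qv_sum Ψ hnorm
        have h1 : 0 ≤ (2:ℝ) := by norm_num
        nlinarith [qv_shift_sum Ψ hnorm, qv_sum Ψ hnorm]
    _ = 4 := by norm_num

/-- Bound on the on-site two-particle density:
`∑_{x=1}^{ℓ} ρ(x,x) ≤ (4/ℓ) n(n−1) + (4+√3)(n−1)√(n/S) E_{ℓ,n}(Ψ)^{1/2}`. -/
theorem two_particle_density_diagonal_bound (twoS : ℕ) (hS : 1 ≤ twoS)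
    {n ℓ : ℕ} (hn : 1 ≤ n) (hℓ : 1 ≤ ℓ)
    (Ψ : (Fin n → Fin ℓ) → ℂ) (hΨ : SymmFun Ψ)
    (hnorm : ∑ X : Fin n → Fin ℓ, ‖Ψ X‖ ^ 2 = 1)
    (hsupp : ∀ X : Fin n → Fin ℓ, (∃ x : ℕ, twoS < occ X x) → Ψ X = 0) :
    ∑ x ∈ Finset.range ℓ, rho2 Ψ x x ≤
      4 / (ℓ : ℝ) * ((n : ℝ) * ((n : ℝ) - 1)) +
        (4 + Real.sqrt 3) * ((n : ℝ) - 1) * Real.sqrt ((n : ℝ) / Sval twoS) *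
          Real.sqrt (Eform twoS Ψ) := by
  obtain ⟨m, rfl⟩ : ∃ m, n = m + 1 := ⟨n - 1, by omega⟩
  have hl0 : (0:ℝ) < ℓ := by exact_mod_cast hℓ
  have hSv : (0:ℝ) < Sval twoS := by
    unfold Sval
    have : (1:ℝ) ≤ twoS := by exact_mod_cast hS
    linarith
  set Q : ℝ := ∑ z ∈ Finset.range ℓ, Dsq twoS Ψ z with hQdef
  have hQ0 : 0 ≤ Q := by
    apply Finset.sum_nonneg
    intro z _
    unfold Dsq
    split
    · apply Finset.sum_nonneg; intro Y _; positivity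
    · exact le_rfl
  set sGD : ℝ := ∑ z ∈ Finset.range ℓ, GD twoS Ψ z with hGDdef
  set SH : ℝ := ∑ x ∈ Finset.range ℓ, HD Ψ x x with hSHdef
  -- LHS rewrite
  have hLHS : ∑ x ∈ Finset.range ℓ, rho2 Ψ x x = ((m:ℝ)+1) * SH := by
    rw [hSHdef, Finset.mul_sum]
    apply Finset.sum_congr rfl
    intro x hx
    have hxl := Finset.mem_range.mp hx
    rw [rho2_diag Ψ hΨ x hxl]
    unfold HD
    rw [dif_pos hxl]
  -- window bound summed over z
  have hwin : ∀ x ∈ Finset.range ℓ, (ℓ:ℝ) * HD Ψ x x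
      ≤ (∑ z ∈ Finset.range ℓ, HD Ψ x z) + (ℓ:ℝ) * ∑ w ∈ Finset.range ℓ, Abar twoS Ψ x w := by
    intro x hx
    have hxl := Finset.mem_range.mp hx
    have h1 : ∀ z ∈ Finset.range ℓ, HD Ψ x x ≤ HD Ψ x z + ∑ w ∈ Finset.range ℓ, Abar twoS Ψ x w :=
      fun z hz => window hS Ψ hΨ hsupp x z hxl (Finset.mem_range.mp hz)
    have h2 := Finset.sum_le_sum h1
    rw [Finset.sum_const, Finset.card_range, nsmul_eq_mul] at h2
    rw [Finset.sum_add_distrib, Finset.sum_const, Finset.card_range, nsmul_eq_mul] at h2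
    exact h2
  -- middle double sum
  have hmid : ∑ x ∈ Finset.range ℓ, ∑ z ∈ Finset.range ℓ, HD Ψ x z = (m:ℝ) := by
    have hHD : ∀ (x : ℕ) (z : Fin ℓ), HD Ψ x (z:ℕ) = Hf Ψ x z := by
      intro x z
      unfold HD
      rw [dif_pos z.isLt]
    calc ∑ x ∈ Finset.range ℓ, ∑ z ∈ Finset.range ℓ, HD Ψ x z
        = ∑ x : Fin ℓ, ∑ z ∈ Finset.range ℓ, HD Ψ (x:ℕ) z := by
          rw [Fin.sum_univ_eq_sum_range (fun x => ∑ z ∈ Finset.range ℓ, HD Ψ x z) ℓ]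
      _ = ∑ x : Fin ℓ, ∑ z : Fin ℓ, Hf Ψ (x:ℕ) z := by
          apply Finset.sum_congr rfl
          intro x _
          rw [← Fin.sum_univ_eq_sum_range (fun z => HD Ψ (x:ℕ) z) ℓ]
          exact Finset.sum_congr rfl (fun z _ => hHD x z)
      _ = (m:ℝ) := Hf_total Ψ hnorm
  -- Abar total
  have hAtot : ∑ x ∈ Finset.range ℓ, ∑ w ∈ Finset.range ℓ, Abar twoS Ψ x w = (m:ℝ) * sGD := by
    rw [Finset.sum_comm, hGDdef, Finset.mul_sum]
    apply Finset.sum_congr rfl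
    intro w _
    rw [← Fin.sum_univ_eq_sum_range (fun x => Abar twoS Ψ x w) ℓ]
    exact Abar_sum_x twoS Ψ w
  -- combine
  have hsum1 : (ℓ:ℝ) * SH ≤ (m:ℝ) + (ℓ:ℝ) * ((m:ℝ) * sGD) := by
    have h2 := Finset.sum_le_sum hwin
    rw [← Finset.mul_sum, ← hSHdef] at h2
    rw [Finset.sum_add_distrib, hmid, ← Finset.mul_sum, hAtot] at h2
    exact h2
  have hSH : SH ≤ (m:ℝ)/ℓ + (m:ℝ)*sGD := by
    have hR : ((m:ℝ)/ℓ + (m:ℝ)*sGD) * ℓ = (m:ℝ) + (ℓ:ℝ)*((m:ℝ)*sGD) := by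
      field_simp
    have h3 : SH * ℓ ≤ ((m:ℝ)/ℓ + (m:ℝ)*sGD) * ℓ := by
      rw [hR, mul_comm SH (ℓ:ℝ)]
      exact hsum1
    exact le_of_mul_le_mul_right h3 hl0
  -- energy identities
  have hE : Eform twoS Ψ = ((m:ℝ)+1) * (Sval twoS * Q) := by
    rw [energy_eq Ψ hΨ, hQdef]
  have hGsqrt : Real.sqrt (∑ z ∈ Finset.range ℓ, Gsq twoS Ψ z) ≤ 2 := by
    calc Real.sqrt (∑ z ∈ Finset.range ℓ, Gsq twoS Ψ z)
        ≤ Real.sqrt 4 := Real.sqrt_le_sqrt (Gsq_sum_le twoS Ψ hnorm)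
      _ = 2 := by
          rw [show (4:ℝ) = 2^2 by norm_num, Real.sqrt_sq (by norm_num : (0:ℝ) ≤ 2)]
  have hGD2 : sGD ≤ 2 * Real.sqrt Q := by
    have h1 := GD_CS twoS Ψ
    rw [← hQdef, ← hGDdef] at h1
    calc sGD ≤ Real.sqrt Q * Real.sqrt (∑ z ∈ Finset.range ℓ, Gsq twoS Ψ z) := h1
      _ ≤ Real.sqrt Q * 2 := mul_le_mul_of_nonneg_left hGsqrt (Real.sqrt_nonneg _)
      _ = 2 * Real.sqrt Q := by ring
  -- key sqrt identity
  have hkey : Real.sqrt (((m:ℝ)+1)/Sval twoS) * Real.sqrt (Eform twoS Ψ)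
      = ((m:ℝ)+1) * Real.sqrt Q := by
    rw [hE, ← Real.sqrt_mul (by positivity)]
    have harg : ((m:ℝ)+1)/Sval twoS * (((m:ℝ)+1)*(Sval twoS * Q)) = ((m:ℝ)+1)^2 * Q := by
      field_simp
    rw [harg, Real.sqrt_mul (by positivity), Real.sqrt_sq (by positivity)]
  -- final chain
  have hm0 : (0:ℝ) ≤ (m:ℝ) := Nat.cast_nonneg m
  have hsq3 : (0:ℝ) ≤ Real.sqrt 3 := Real.sqrt_nonneg 3
  have hsqQ : (0:ℝ) ≤ Real.sqrt Q := Real.sqrt_nonneg Q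
  have hchain : ∑ x ∈ Finset.range ℓ, rho2 Ψ x x
      ≤ ((m:ℝ)+1)*(m:ℝ)/ℓ + 2*(((m:ℝ)+1)*(m:ℝ)*Real.sqrt Q) := by
    rw [hLHS]
    calc ((m:ℝ)+1) * SH ≤ ((m:ℝ)+1) * ((m:ℝ)/ℓ + (m:ℝ)*sGD) :=
          mul_le_mul_of_nonneg_left hSH (by positivity)
      _ ≤ ((m:ℝ)+1) * ((m:ℝ)/ℓ + (m:ℝ)*(2*Real.sqrt Q)) := by
          apply mul_le_mul_of_nonneg_left _ (by positivity : (0:ℝ) ≤ (m:ℝ)+1)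
          apply add_le_add_right
          exact mul_le_mul_of_nonneg_left hGD2 hm0
      _ = ((m:ℝ)+1)*(m:ℝ)/ℓ + 2*(((m:ℝ)+1)*(m:ℝ)*Real.sqrt Q) := by ring
  have hRHS : 4 / (ℓ : ℝ) * ((((m:ℕ):ℝ)+1) * ((((m:ℕ):ℝ)+1) - 1)) +
        (4 + Real.sqrt 3) * ((((m:ℕ):ℝ)+1) - 1) * Real.sqrt ((((m:ℕ):ℝ)+1) / Sval twoS) *
          Real.sqrt (Eform twoS Ψ)
      = 4/(ℓ:ℝ) * (((m:ℝ)+1)*(m:ℝ)) + (4 + Real.sqrt 3) * ((m:ℝ) * (((m:ℝ)+1) * Real.sqrt Q)) := by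
    rw [← hkey]
    ring
  have hcast : ((↑(m+1) : ℝ)) = (m:ℝ)+1 := by push_cast; ring
  rw [hcast, hRHS]
  have h1 : ((m:ℝ)+1)*(m:ℝ)/ℓ ≤ 4/(ℓ:ℝ) * (((m:ℝ)+1)*(m:ℝ)) := by
    have hX : (0:ℝ) ≤ ((m:ℝ)+1)*(m:ℝ)/ℓ := by positivity
    have : 4/(ℓ:ℝ) * (((m:ℝ)+1)*(m:ℝ)) = 4 * (((m:ℝ)+1)*(m:ℝ)/ℓ) := by ring
    rw [this]
    linarith
  have h2 : 2*(((m:ℝ)+1)*(m:ℝ)*Real.sqrt Q)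
      ≤ (4 + Real.sqrt 3) * ((m:ℝ) * (((m:ℝ)+1) * Real.sqrt Q)) := by
    have hY : (0:ℝ) ≤ (m:ℝ) * (((m:ℝ)+1) * Real.sqrt Q) := by positivity
    nlinarith
  linarith

end
end

section
/- For every integer ℓ ≥ 1, the double sum satisfies ∑_{m=1}^{ℓ} ∑_{n=1}^{ℓ} 1/(m² + n²) ≤ (π/2) · ln(1 + 2ℓ). -/
open scoped BigOperators

open Real Set Finset

lemma arctan_sub_ge {a b : ℝ} (ha : 0 ≤ a) (hab : a ≤ b) :
    (b - a) / (1 + b ^ 2) ≤ Real.arctan b - Real.arctan a := by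
  have hb2 : (0:ℝ) < 1 + b ^ 2 := by positivity
  have key := (convex_Icc a b).mul_sub_le_image_sub_of_le_deriv
    (f := Real.arctan) (Real.differentiable_arctan.continuous.continuousOn)
    (Real.differentiable_arctan.differentiableOn) (C := 1 / (1 + b ^ 2))
    (fun x hx => by
      rw [Real.deriv_arctan]
      have hx' : x ∈ Icc a b := interior_subset hx
      have h1 : (0:ℝ) < 1 + x ^ 2 := by positivity
      apply div_le_div_of_nonneg_left one_pos.le h1
      have hx0 : 0 ≤ x := le_trans ha hx'.1
      nlinarith [hx'.2])
    a ⟨le_refl a, hab⟩ b ⟨hab, le_refl b⟩ hab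
  calc (b - a) / (1 + b ^ 2) = 1 / (1 + b ^ 2) * (b - a) := by ring
    _ ≤ _ := key

lemma log_ratio_key {t : ℝ} (ht0 : 0 ≤ t) (ht1 : t < 1) :
    2 * t ≤ Real.log (1 + t) - Real.log (1 - t) := by
  set f : ℝ → ℝ := fun x => Real.log (1 + x) - Real.log (1 - x) with hf
  have hd : ∀ x ∈ Ioo (-1:ℝ) 1, HasDerivAt f (1 / (1 + x) + 1 / (1 - x)) x := by
    intro x hx
    have h1 : (0:ℝ) < 1 + x := by linarith [hx.1]
    have h2 : (0:ℝ) < 1 - x := by linarith [hx.2]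
    have d1 : HasDerivAt (fun x : ℝ => Real.log (1 + x)) (1 / (1 + x)) x := by
      have := ((hasDerivAt_id x).const_add 1).log h1.ne'
      simpa using this
    have d2 : HasDerivAt (fun x : ℝ => Real.log (1 - x)) (-1 / (1 - x)) x := by
      have := ((hasDerivAt_id x).const_sub 1).log h2.ne'
      simpa using this
    have := d1.sub d2
    exact this.congr_deriv (by ring)
  have hsub : Icc (0:ℝ) t ⊆ Ioo (-1:ℝ) 1 := fun x hx =>
    ⟨by linarith [hx.1], by linarith [hx.2]⟩
  have hdiff : DifferentiableOn ℝ f (Icc (0:ℝ) t) := fun x hx =>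
    ((hd x (hsub hx)).differentiableAt).differentiableWithinAt
  have key := (convex_Icc (0:ℝ) t).mul_sub_le_image_sub_of_le_deriv
    hdiff.continuousOn
    (hdiff.mono interior_subset) (C := 2)
    (fun x hx => by
      have hx' : x ∈ Icc (0:ℝ) t := interior_subset hx
      rw [(hd x (hsub hx')).deriv]
      have h1 : (0:ℝ) < 1 + x := by linarith [(hsub hx').1]
      have h2 : (0:ℝ) < 1 - x := by linarith [(hsub hx').2]
      rw [div_add_div _ _ h1.ne' h2.ne', le_div_iff₀ (by positivity)]
      nlinarith [sq_nonneg x, hx'.1])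
    0 ⟨le_refl 0, ht0⟩ t ⟨ht0, le_refl t⟩ ht0
  have hf0 : f 0 = 0 := by simp [hf]
  have hft : f t = Real.log (1 + t) - Real.log (1 - t) := rfl
  linarith [key, hf0, hft]

lemma inv_le_log_ratio {m : ℕ} (hm : 1 ≤ m) :
    (1 : ℝ) / m ≤ Real.log (2 * m + 1) - Real.log (2 * m - 1) := by
  have hm' : (1:ℝ) ≤ (m:ℝ) := by exact_mod_cast hm
  have hmpos : (0:ℝ) < m := by linarith
  set t : ℝ := 1 / (2 * m) with ht
  have ht0 : 0 < t := by positivity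
  have ht1 : t < 1 := by
    rw [ht, div_lt_one (by positivity)]; linarith
  have key := log_ratio_key ht0.le ht1
  have e1 : 1 + t = (2 * (m:ℝ) + 1) / (2 * m) := by
    rw [ht]; field_simp
  have e2 : 1 - t = (2 * (m:ℝ) - 1) / (2 * m) := by
    rw [ht]; field_simp
  have h2m : (0:ℝ) < 2 * m := by positivity
  have h2m1 : (0:ℝ) < 2 * (m:ℝ) + 1 := by linarith
  have h2m1' : (0:ℝ) < 2 * (m:ℝ) - 1 := by linarith
  rw [e1, e2, Real.log_div h2m1.ne' h2m.ne', Real.log_div h2m1'.ne' h2m.ne'] at key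
  have h2t : 2 * t = 1 / (m:ℝ) := by rw [ht]; field_simp
  linarith

/-- `∑_{m=1}^ℓ ∑_{n=1}^ℓ 1/(m²+n²) ≤ (π/2) ln(1+2ℓ)`. -/
theorem double_sum_inv_sq_bound (ℓ : ℕ) (hℓ : 1 ≤ ℓ) :
    ∑ m ∈ Finset.Icc 1 ℓ, ∑ n ∈ Finset.Icc 1 ℓ, (1 : ℝ) / ((m : ℝ) ^ 2 + (n : ℝ) ^ 2) ≤
      Real.pi / 2 * Real.log (1 + 2 * (ℓ : ℝ)) := by
  have pi_pos := Real.pi_pos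
  -- Step 1: inner sum bound
  have inner : ∀ m : ℕ, 1 ≤ m →
      ∑ n ∈ Finset.Icc 1 ℓ, (1:ℝ) / ((m:ℝ)^2 + (n:ℝ)^2) ≤ Real.pi / 2 * (1 / (m:ℝ)) := by
    intro m hm1
    have hm' : (1:ℝ) ≤ (m:ℝ) := by exact_mod_cast hm1
    have hmpos : (0:ℝ) < (m:ℝ) := by linarith
    set g : ℕ → ℝ := fun n => Real.arctan ((n:ℝ) / m) with hg
    have hterm : ∀ i : ℕ,
        (1:ℝ) / ((m:ℝ)^2 + ((1 + i : ℕ):ℝ)^2) ≤ 1 / (m:ℝ) * (g (i + 1) - g i) := by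
      intro i
      have ha : (0:ℝ) ≤ (i:ℝ) / m := by positivity
      have hab : (i:ℝ) / m ≤ ((i:ℝ) + 1) / m := by gcongr; linarith
      have hA : (0:ℝ) < (m:ℝ)^2 + ((i:ℝ) + 1)^2 := by positivity
      have key : (m:ℝ) / ((m:ℝ)^2 + ((i:ℝ) + 1)^2) ≤
          Real.arctan (((i:ℝ) + 1) / m) - Real.arctan ((i:ℝ) / m) := by
        calc (m:ℝ) / ((m:ℝ)^2 + ((i:ℝ) + 1)^2)
            = (((i:ℝ) + 1) / m - (i:ℝ) / m) / (1 + (((i:ℝ) + 1) / m)^2) := by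
              rw [div_eq_div_iff hA.ne' (by positivity)]
              field_simp
              ring
          _ ≤ _ := arctan_sub_ge ha hab
      have e1 : ((1 + i : ℕ):ℝ) = (i:ℝ) + 1 := by push_cast; ring
      have e2 : g (i + 1) = Real.arctan (((i:ℝ) + 1) / m) := by
        simp only [hg]; norm_num
      rw [e1, e2]
      calc (1:ℝ) / ((m:ℝ)^2 + ((i:ℝ) + 1)^2)
          = 1 / (m:ℝ) * ((m:ℝ) / ((m:ℝ)^2 + ((i:ℝ) + 1)^2)) := by
            field_simp
        _ ≤ 1 / (m:ℝ) * (Real.arctan (((i:ℝ) + 1) / m) - Real.arctan ((i:ℝ) / m)) := by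
            apply mul_le_mul_of_nonneg_left key (by positivity)
    rw [← Finset.Ico_add_one_right_eq_Icc, Finset.sum_Ico_eq_sum_range]
    simp only [Nat.add_sub_cancel]
    calc ∑ i ∈ Finset.range ℓ, (1:ℝ) / ((m:ℝ)^2 + ((1 + i : ℕ):ℝ)^2)
        ≤ ∑ i ∈ Finset.range ℓ, 1 / (m:ℝ) * (g (i + 1) - g i) :=
          Finset.sum_le_sum fun i _ => hterm i
      _ = 1 / (m:ℝ) * (g ℓ - g 0) := by
          rw [← Finset.mul_sum, Finset.sum_range_sub]
      _ ≤ 1 / (m:ℝ) * (Real.pi / 2) := by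
          apply mul_le_mul_of_nonneg_left _ (by positivity)
          have h0 : g 0 = 0 := by simp [hg]
          have h1 : g ℓ < Real.pi / 2 := Real.arctan_lt_pi_div_two _
          linarith
      _ = Real.pi / 2 * (1 / (m:ℝ)) := by ring
  -- Step 2: harmonic sum bound
  set h : ℕ → ℝ := fun n => Real.log (2 * (n:ℝ) + 1) with hh
  have houter : ∀ i : ℕ, (1:ℝ) / ((1 + i : ℕ):ℝ) ≤ h (i + 1) - h i := by
    intro i
    have := inv_le_log_ratio (m := i + 1) (Nat.le_add_left 1 i)
    have e1 : ((1 + i : ℕ):ℝ) = ((i + 1 : ℕ):ℝ) := by push_cast; ring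
    have e2 : h (i + 1) = Real.log (2 * ((i + 1 : ℕ):ℝ) + 1) := by simp [hh]
    have e3 : h i = Real.log (2 * ((i + 1 : ℕ):ℝ) - 1) := by
      simp only [hh]; congr 1; push_cast; ring
    rw [e1, e2, e3]
    exact this
  calc ∑ m ∈ Finset.Icc 1 ℓ, ∑ n ∈ Finset.Icc 1 ℓ, (1:ℝ) / ((m:ℝ)^2 + (n:ℝ)^2)
      ≤ ∑ m ∈ Finset.Icc 1 ℓ, Real.pi / 2 * (1 / (m:ℝ)) :=
        Finset.sum_le_sum fun m hm => inner m (Finset.mem_Icc.mp hm).1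
    _ = Real.pi / 2 * ∑ m ∈ Finset.Icc 1 ℓ, (1:ℝ) / (m:ℝ) := by
        rw [Finset.mul_sum]
    _ ≤ Real.pi / 2 * Real.log (1 + 2 * (ℓ:ℝ)) := by
        apply mul_le_mul_of_nonneg_left _ (by positivity)
        rw [← Finset.Ico_add_one_right_eq_Icc, Finset.sum_Ico_eq_sum_range]
        simp only [Nat.add_sub_cancel]
        calc ∑ i ∈ Finset.range ℓ, (1:ℝ) / ((1 + i : ℕ):ℝ)
            ≤ ∑ i ∈ Finset.range ℓ, (h (i + 1) - h i) :=
              Finset.sum_le_sum fun i _ => houter i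
          _ = h ℓ - h 0 := Finset.sum_range_sub h ℓ
          _ = Real.log (1 + 2 * (ℓ:ℝ)) := by
              simp only [hh]
              norm_num
              rw [add_comm]
end
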